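/- arXiv:2602.03175 — 4 statements merged into one kernel-verified Lean document; each statement's English description precedes it below -/
import Mathlib

section
/- Let S ⊆ [0,1]^d be nonempty and ε ∈ [0,1]. Then HV(S^{+ε}) ≤ HV(S) + d · ε · (R + ε)^{d−1}. -/
open MeasureTheory

/-- The dominated region of `S` with respect to the reference point `z`:
all points `y` with `z ≤ y ≤ u` componentwise for some `u ∈ S`. -/
def dominatedRegion {d : ℕ} (z : Fin d → ℝ) (S : Set (Fin d → ℝ)) : Set (Fin d → ℝ) :=
  {y | ∃ u ∈ S, z ≤ y ∧ y ≤ u}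

/-- The dominated hypervolume: Lebesgue measure of the dominated region. -/
noncomputable def HV {d : ℕ} (z : Fin d → ℝ) (S : Set (Fin d → ℝ)) : ℝ :=
  (volume (dominatedRegion z S)).toReal

/-- The ℓ∞-expansion `S^{+ε}` (the norm on `Fin d → ℝ` is the sup norm). -/
def expandLinf {d : ℕ} (S : Set (Fin d → ℝ)) (ε : ℝ) : Set (Fin d → ℝ) :=
  {x | ∃ s ∈ S, ‖x - s‖ ≤ ε}
/-!
Write `c` for the constant vector with entries `ε`. Every point dominated by `S^{+ε}` is, after
translation by `-c`, dominated by `S` with respect to the lowered reference point `z - c`, so by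
translation invariance `HV(S^{+ε}) ≤ HV_{z-c}(S)`. A point dominated with respect to `z - c` but
not with respect to `z` has some coordinate `k` in `[z_k - ε, z_k)`, so it lies in one of `d` slabs
of volume `ε ∏_{i ≠ k} (1 - z_i + ε) ≤ ε (R + ε)^{d-1}`.
-/

open Set
open scoped ENNReal

theorem volume_Icc_update_right {ι : Type*} [Fintype ι] [DecidableEq ι]
    (a b : ι → ℝ) (k : ι) (t : ℝ) :
    volume (Icc a (Function.update b k t)) =
      ENNReal.ofReal (t - a k) * ∏ i ∈ Finset.univ.erase k, ENNReal.ofReal (b i - a i) := by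
  rw [Real.volume_Icc_pi, ← Finset.mul_prod_erase _ _ (Finset.mem_univ k)]
  congr 1
  · simp
  · refine Finset.prod_congr rfl fun i hi => ?_
    rw [Function.update_of_ne (Finset.ne_of_mem_erase hi)]

section DominatedRegion

variable {d : ℕ}

theorem dominatedRegion_subset_Icc {z b : Fin d → ℝ} {S : Set (Fin d → ℝ)} (hS : S ⊆ Iic b) :
    dominatedRegion z S ⊆ Icc z b := by
  rintro y ⟨u, hu, hzy, hyu⟩
  exact ⟨hzy, hyu.trans (hS hu)⟩

theorem volume_dominatedRegion_expandLinf_le (z : Fin d → ℝ) (S : Set (Fin d → ℝ)) (ε : ℝ) :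
    volume (dominatedRegion z (expandLinf S ε)) ≤ volume (dominatedRegion (z - fun _ => ε) S) := by
  have hsub : dominatedRegion z (expandLinf S ε) ⊆
      (fun y => y + fun _ => -ε) ⁻¹' dominatedRegion (z - fun _ => ε) S := by
    rintro y ⟨x, ⟨s, hs, hxs⟩, hzy, hyx⟩
    refine ⟨s, hs, fun i => ?_, fun i => ?_⟩
    · simpa [sub_eq_add_neg] using hzy i
    · have : x i - s i ≤ ε := (le_abs_self _).trans ((norm_le_pi_norm (x - s) i).trans hxs)
      simp only [Pi.add_apply]
      linarith [hyx i]
  exact (measure_mono hsub).trans_eq (measure_preimage_add_right _ _ _)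

theorem dominatedRegion_subset_union_Icc (w z : Fin d → ℝ) {b : Fin d → ℝ}
    {S : Set (Fin d → ℝ)} (hS : S ⊆ Iic b) :
    dominatedRegion w S ⊆ dominatedRegion z S ∪ ⋃ k, Icc w (Function.update b k (z k)) := by
  rintro y ⟨u, hu, hwy, hyu⟩
  by_cases hzy : z ≤ y
  · exact Or.inl ⟨u, hu, hzy, hyu⟩
  obtain ⟨k, hk⟩ : ∃ k, y k < z k := by simpa [Pi.le_def] using hzy
  refine Or.inr (mem_iUnion.2 ⟨k, hwy, fun i => ?_⟩)
  rcases eq_or_ne i k with rfl | hik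
  · simpa using hk.le
  · simpa [Function.update_of_ne hik] using (hyu.trans (hS hu)) i

theorem volume_dominatedRegion_le_add (w z : Fin d → ℝ) {b : Fin d → ℝ}
    {S : Set (Fin d → ℝ)} (hS : S ⊆ Iic b) :
    volume (dominatedRegion w S) ≤ volume (dominatedRegion z S) +
      ∑ k, ENNReal.ofReal (z k - w k) * ∏ i ∈ Finset.univ.erase k, ENNReal.ofReal (b i - w i) :=
  calc volume (dominatedRegion w S)
      ≤ volume (dominatedRegion z S ∪ ⋃ k, Icc w (Function.update b k (z k))) :=
        measure_mono (dominatedRegion_subset_union_Icc w z hS)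
    _ ≤ volume (dominatedRegion z S) + ∑ k, volume (Icc w (Function.update b k (z k))) :=
        (measure_union_le _ _).trans (by gcongr; exact measure_iUnion_fintype_le _ _)
    _ = _ := by simp only [volume_Icc_update_right]

theorem volume_dominatedRegion_sub_const_le {z b : Fin d → ℝ} {S : Set (Fin d → ℝ)}
    (hS : S ⊆ Iic b) {ε R : ℝ} (hε : 0 ≤ ε) (hR : ∀ j, b j - z j ≤ R) (hR0 : 0 ≤ R) :
    volume (dominatedRegion (z - fun _ => ε) S) ≤
      volume (dominatedRegion z S) + ENNReal.ofReal (d * ε * (R + ε) ^ (d - 1)) := by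
  set w : Fin d → ℝ := z - fun _ => ε
  have hslab : ∀ k, ENNReal.ofReal (z k - w k) *
      ∏ i ∈ Finset.univ.erase k, ENNReal.ofReal (b i - w i) ≤
        ENNReal.ofReal (ε * (R + ε) ^ (d - 1)) := by
    intro k
    rw [ENNReal.ofReal_mul hε, ENNReal.ofReal_pow (by linarith)]
    refine mul_le_mul' (by simp [w]) ?_
    calc _ ≤ ENNReal.ofReal (R + ε) ^ (Finset.univ.erase k).card :=
          Finset.prod_le_pow_card _ _ _ fun i _ =>
            ENNReal.ofReal_le_ofReal (by simp only [w, Pi.sub_apply]; linarith [hR i])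
      _ = _ := by simp [Finset.card_erase_of_mem]
  calc volume (dominatedRegion w S)
      ≤ volume (dominatedRegion z S) + ∑ _k : Fin d, ENNReal.ofReal (ε * (R + ε) ^ (d - 1)) :=
        (volume_dominatedRegion_le_add w z hS).trans
          (add_le_add_right (Finset.sum_le_sum fun k _ => hslab k) _)
    _ = _ := by
        rw [Finset.sum_const, Finset.card_univ, Fintype.card_fin, nsmul_eq_mul, mul_assoc,
          ← ENNReal.ofReal_natCast, ← ENNReal.ofReal_mul (by positivity)]

end DominatedRegion

theorem hv_expansion_bound_general {d : ℕ} (z : Fin d → ℝ) (hz : ∀ j, z j < 0)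
    (S : Set (Fin d → ℝ)) (hSsub : S ⊆ Set.Icc 0 1)
    (ε : ℝ) (hε0 : 0 ≤ ε) :
    HV z (expandLinf S ε) ≤ HV z S + (d : ℝ) * ε * ((⨆ j, (1 - z j)) + ε) ^ (d - 1) := by
  set R := ⨆ j, (1 - z j)
  have hS1 : S ⊆ Iic 1 := fun s hs => (hSsub hs).2
  have hR : ∀ j, (1 : Fin d → ℝ) j - z j ≤ R := le_ciSup (finite_range _).bddAbove
  have hR0 : 0 ≤ R := Real.iSup_nonneg fun j => by linarith [hz j]
  have hvol := (volume_dominatedRegion_expandLinf_le z S ε).trans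
    (volume_dominatedRegion_sub_const_le hS1 hε0 hR hR0)
  have hfin : volume (dominatedRegion z S) ≠ ∞ :=
    ((measure_mono (dominatedRegion_subset_Icc hS1)).trans_lt isCompact_Icc.measure_lt_top).ne
  have := ENNReal.toReal_mono (ENNReal.add_ne_top.2 ⟨hfin, ENNReal.ofReal_ne_top⟩) hvol
  rwa [ENNReal.toReal_add hfin ENNReal.ofReal_ne_top,
    ENNReal.toReal_ofReal (by positivity)] at this

/-- One-sided HV stability under ℓ∞ expansion, with `R = max_j (1 - z_j)`. -/
theorem hv_expansion_bound {d : ℕ} (hd : 1 ≤ d) (z : Fin d → ℝ) (hz : ∀ j, z j < 0)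
    (S : Set (Fin d → ℝ)) (hS : S.Nonempty) (hSsub : S ⊆ Set.Icc 0 1)
    (ε : ℝ) (hε0 : 0 ≤ ε) (hε1 : ε ≤ 1) :
    HV z (expandLinf S ε) ≤ HV z S + (d : ℝ) * ε * ((⨆ j, (1 - z j)) + ε) ^ (d - 1) :=
  hv_expansion_bound_general z hz S hSsub ε hε0
end

section
/- Let S, S' ⊆ [0,1]^d be nonempty compact sets and ε ≥ 0 such that for every s ∈ S there exists s' ∈ S' with ‖s − s'‖_∞ ≤ ε. Then for every y ∈ D(S) there exists y' ∈ D(S') with ‖y − y'‖_∞ ≤ ε; that is, D(S) is contained in the ℓ∞ ε-thickening of D(S'). -/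
/-- If every point of `S` is within ℓ∞-distance `ε` of some point of `S'`, then every
point of the dominated region `D(S)` is within ℓ∞-distance `ε` of some point of `D(S')`
(the norm on `Fin d → ℝ` is the sup norm). -/
theorem dominatedRegion_thickening {d : ℕ} (hd : 1 ≤ d) (z : Fin d → ℝ)
    (hz : ∀ j, z j < 0) (S S' : Set (Fin d → ℝ))
    (hS : S.Nonempty) (hS' : S'.Nonempty) (hSc : IsCompact S) (hS'c : IsCompact S')
    (hSsub : S ⊆ Set.Icc 0 1) (hS'sub : S' ⊆ Set.Icc 0 1)
    (ε : ℝ) (hε : 0 ≤ ε)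
    (h : ∀ s ∈ S, ∃ s' ∈ S', ‖s - s'‖ ≤ ε) :
    ∀ y ∈ dominatedRegion z S, ∃ y' ∈ dominatedRegion z S', ‖y - y'‖ ≤ ε := by
  rintro y ⟨u, huS, hzy, hyu⟩
  obtain ⟨u', hu'S', huu'⟩ := h u huS
  refine ⟨fun j => min (y j) (u' j), ⟨u', hu'S', ?_, ?_⟩, ?_⟩
  · intro j
    have h0 : (0:ℝ) ≤ u' j := (hS'sub hu'S').1 j
    exact le_min (hzy j) ((hz j).le.trans h0)
  · intro j; exact min_le_right _ _
  · rw [pi_norm_le_iff_of_nonneg hε]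
    intro j
    have hj : |u j - u' j| ≤ ε := by
      have := norm_le_pi_norm (u - u') j
      simp only [Pi.sub_apply, Real.norm_eq_abs] at this
      exact this.trans huu'
    simp only [Pi.sub_apply, Real.norm_eq_abs]
    rcases le_total (y j) (u' j) with hle | hle
    · simp [min_eq_left hle, hε]
    · rw [min_eq_right hle, abs_of_nonneg (by linarith)]
      have : y j - u' j ≤ u j - u' j := by linarith [hyu j]
      exact this.trans ((le_abs_self _).trans hj)
end

section
/- Let S, S' ⊆ [0,1]^d be nonempty compact sets and ε ∈ [0,1] such that the Hausdorff distance between S and S' with respect to the ℓ∞ metric is at most ε. Then |HV(S) − HV(S')| ≤ d · ε · (R + ε)^{d−1}. -/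
open MeasureTheory

/-!
Translate `D(S)` down by `ε` in every coordinate. A point `u ∈ S` has some `u' ∈ S'` with
`u ≤ u' + ε`, so each translated point either still lies above `z`, hence in `D(S')`, or drops
below `z` in some coordinate `j`, hence lies in a slab of width `ε` along the face `y j = z j`
of the box `[z - ε, 1]`. Translation invariance of Lebesgue measure gives
`HV(S) ≤ HV(S') + ∑ⱼ ε · ∏_{i ≠ j} (1 - z i + ε)`, and each product is at most `(R + ε)^(d-1)`.
-/

theorem Real.volume_Icc_sub_const_update {ι : Type*} [Fintype ι] [DecidableEq ι]
    (z c : ι → ℝ) (ε : ℝ) (j : ι) :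
    volume (Set.Icc (z - fun _ => ε) (Function.update c j (z j))) =
      ENNReal.ofReal ε * ∏ i ∈ Finset.univ.erase j, ENNReal.ofReal (c i - z i + ε) := by
  rw [Real.volume_Icc_pi, ← Finset.mul_prod_erase _ _ (Finset.mem_univ j)]
  congr 1
  · simp
  · refine Finset.prod_congr rfl fun i hi => ?_
    simp only [Function.update_of_ne (Finset.ne_of_mem_erase hi), Pi.sub_apply]
    ring_nf

theorem exists_le_add_of_hausdorffDist_le {ι : Type*} [Fintype ι] {S S' : Set (ι → ℝ)}
    {ε : ℝ} (hS' : IsCompact S') (hne : S'.Nonempty) (hfin : Metric.hausdorffEDist S S' ≠ ⊤)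
    (h : Metric.hausdorffDist S S' ≤ ε) : ∀ u ∈ S, ∃ u' ∈ S', ∀ i, u i ≤ u' i + ε := by
  intro u hu
  obtain ⟨u', hu', hdist⟩ := hS'.exists_infDist_eq_dist hne u
  have huu' : dist u u' ≤ ε :=
    hdist ▸ (Metric.infDist_le_hausdorffDist_of_mem hu hfin).trans h
  refine ⟨u', hu', fun i => ?_⟩
  have hi : |u i - u' i| ≤ ε := by
    simpa only [Real.dist_eq] using (dist_le_pi_dist u u' i).trans huu'
  linarith [(abs_le.1 hi).2]

section Dominated

variable {d : ℕ} {z c : Fin d → ℝ} {S S' : Set (Fin d → ℝ)} {ε : ℝ}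

theorem volume_dominatedRegion_ne_top (hS : S ⊆ Set.Iic c) :
    volume (dominatedRegion z S) ≠ ⊤ :=
  measure_ne_top_of_subset (s := Set.Icc z c)
    (fun _ ⟨_, hu, hzy, hyu⟩ => ⟨hzy, hyu.trans (hS hu)⟩) isCompact_Icc.measure_lt_top.ne

theorem dominatedRegion_subset_preimage_sub (hS' : S' ⊆ Set.Iic c)
    (h : ∀ u ∈ S, ∃ u' ∈ S', ∀ i, u i ≤ u' i + ε) :
    dominatedRegion z S ⊆ (· + fun _ => -ε) ⁻¹'
      (dominatedRegion z S' ∪ ⋃ j, Set.Icc (z - fun _ => ε) (Function.update c j (z j))) := by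
  rintro y ⟨u, hu, hzy, hyu⟩
  obtain ⟨u', hu', huu'⟩ := h u hu
  have hle : y + (fun _ => -ε) ≤ u' := fun i => by
    simp only [Pi.add_apply]
    linarith [hyu i, huu' i]
  by_cases hz : z ≤ y + fun _ => -ε
  · exact Or.inl ⟨u', hu', hz, hle⟩
  obtain ⟨j, hj⟩ := not_forall.1 hz
  refine Or.inr (Set.mem_iUnion.2 ⟨j, fun i => ?_, fun i => ?_⟩)
  · simp only [Pi.sub_apply, Pi.add_apply]
    linarith [hzy i]
  rcases eq_or_ne i j with rfl | hij
  · simpa using (not_le.1 hj).le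
  · simpa [hij] using (hle i).trans (hS' hu' i)

theorem volume_dominatedRegion_le_add_s4 (hS' : S' ⊆ Set.Iic c)
    (h : ∀ u ∈ S, ∃ u' ∈ S', ∀ i, u i ≤ u' i + ε) :
    volume (dominatedRegion z S) ≤ volume (dominatedRegion z S') +
      ∑ j, ENNReal.ofReal ε * ∏ i ∈ Finset.univ.erase j, ENNReal.ofReal (c i - z i + ε) :=
  calc volume (dominatedRegion z S)
      ≤ volume ((· + fun _ => -ε) ⁻¹'
          (dominatedRegion z S' ∪ ⋃ j, Set.Icc (z - fun _ => ε) (Function.update c j (z j)))) :=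
        measure_mono (dominatedRegion_subset_preimage_sub hS' h)
    _ ≤ volume (dominatedRegion z S') +
          volume (⋃ j, Set.Icc (z - fun _ => ε) (Function.update c j (z j))) := by
        rw [measure_preimage_add_right]
        exact measure_union_le _ _
    _ ≤ _ := by
        gcongr
        refine (measure_iUnion_fintype_le _ _).trans_eq ?_
        simp only [Real.volume_Icc_sub_const_update]

theorem HV_le_add_of_forall_exists_le_add (hz : ∀ j, z j < 0) (hS' : S' ⊆ Set.Iic 1)
    (hε : 0 ≤ ε) (h : ∀ u ∈ S, ∃ u' ∈ S', ∀ i, u i ≤ u' i + ε) :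
    HV z S ≤ HV z S' + d * ε * ((⨆ j, (1 - z j)) + ε) ^ (d - 1) := by
  set R := ⨆ j, (1 - z j)
  have hfactor : ∀ i, 1 - z i ≤ R := le_ciSup (Set.finite_range _).bddAbove
  have hR : 0 ≤ R + ε := add_nonneg (Real.iSup_nonneg fun j => by linarith [hz j]) hε
  have hslab : ∀ j, ENNReal.ofReal ε * ∏ i ∈ Finset.univ.erase j,
      ENNReal.ofReal ((1 : Fin d → ℝ) i - z i + ε) ≤ ENNReal.ofReal (ε * (R + ε) ^ (d - 1)) := by
    intro j
    rw [ENNReal.ofReal_mul hε, ENNReal.ofReal_pow hR]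
    gcongr
    calc _ ≤ ENNReal.ofReal (R + ε) ^ (Finset.univ.erase j).card :=
          Finset.prod_le_pow_card _ _ _ fun i _ =>
            ENNReal.ofReal_le_ofReal (by simpa using hfactor i)
      _ = _ := by simp [Finset.card_erase_of_mem]
  have hvol : volume (dominatedRegion z S) ≤
      volume (dominatedRegion z S') + ENNReal.ofReal (d * ε * (R + ε) ^ (d - 1)) := by
    refine (volume_dominatedRegion_le_add_s4 hS' h).trans (add_le_add_right ?_ _)
    refine (Finset.sum_le_sum fun j _ => hslab j).trans_eq ?_
    rw [Finset.sum_const, Finset.card_univ, Fintype.card_fin, nsmul_eq_mul, mul_assoc,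
      ENNReal.ofReal_mul (Nat.cast_nonneg d), ENNReal.ofReal_natCast]
  have := ENNReal.toReal_le_add hvol (volume_dominatedRegion_ne_top hS') ENNReal.ofReal_ne_top
  rwa [ENNReal.toReal_ofReal (by positivity)] at this

end Dominated

theorem hv_hausdorff_stability_general {d : ℕ} (z : Fin d → ℝ) (hz : ∀ j, z j < 0)
    (S S' : Set (Fin d → ℝ)) (hS : S.Nonempty) (hS' : S'.Nonempty)
    (hSc : IsCompact S) (hS'c : IsCompact S')
    (hSsub : S ⊆ Set.Icc 0 1) (hS'sub : S' ⊆ Set.Icc 0 1)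
    (ε : ℝ) (hε0 : 0 ≤ ε)
    (hdist : Metric.hausdorffDist S S' ≤ ε) :
    |HV z S - HV z S'| ≤ (d : ℝ) * ε * ((⨆ j, (1 - z j)) + ε) ^ (d - 1) := by
  have hfin : Metric.hausdorffEDist S S' ≠ ⊤ :=
    Metric.hausdorffEDist_ne_top_of_nonempty_of_bounded hS hS' hSc.isBounded hS'c.isBounded
  have hS_le := exists_le_add_of_hausdorffDist_le hS'c hS' hfin hdist
  have hS'_le := exists_le_add_of_hausdorffDist_le hSc hS
    (by rwa [Metric.hausdorffEDist_comm] at hfin) (Metric.hausdorffDist_comm (s := S) ▸ hdist)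
  rw [abs_sub_le_iff]
  constructor
  · linarith [HV_le_add_of_forall_exists_le_add hz (fun u hu => (hS'sub hu).2) hε0 hS_le]
  · linarith [HV_le_add_of_forall_exists_le_add hz (fun u hu => (hSsub hu).2) hε0 hS'_le]

/-- Hypervolume stability: dominated hypervolume is Lipschitz w.r.t. Hausdorff distance
(the metric on `Fin d → ℝ` is the ℓ∞ metric), with `R = max_j (1 - z_j)`. -/
theorem hv_hausdorff_stability {d : ℕ} (hd : 1 ≤ d) (z : Fin d → ℝ) (hz : ∀ j, z j < 0)
    (S S' : Set (Fin d → ℝ)) (hS : S.Nonempty) (hS' : S'.Nonempty)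
    (hSc : IsCompact S) (hS'c : IsCompact S')
    (hSsub : S ⊆ Set.Icc 0 1) (hS'sub : S' ⊆ Set.Icc 0 1)
    (ε : ℝ) (hε0 : 0 ≤ ε) (hε1 : ε ≤ 1)
    (hdist : Metric.hausdorffDist S S' ≤ ε) :
    |HV z S - HV z S'| ≤ (d : ℝ) * ε * ((⨆ j, (1 - z j)) + ε) ^ (d - 1) :=
  hv_hausdorff_stability_general z hz S S' hS hS' hSc hS'c hSsub hS'sub ε hε0 hdist
end

section
/- Let φ : ℝ^d → ℝ be monotone (x ≤ y componentwise implies φ(x) ≤ φ(y)) and L-Lipschitz with respect to the ℓ∞ norm. Let K, T ≥ 1, let μ : {1,…,K} → ℝ^d be fixed mean vectors, and for each round t ∈ {1,…,T} let u_t, b_t : {1,…,K} → ℝ^d satisfy, componentwise for every arm k: μ(k) ≤ u_t(k) ≤ μ(k) + b_t(k). Fix any arm k* and suppose that at each round t the committed arm k_t maximizes φ(u_t(·)) over all K arms. Then Σ_{t=1}^T (φ(μ(k*)) − φ(μ(k_t))) ≤ L · Σ_{t=1}^T Σ_{j=1}^d b_t(k_t)_j. -/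
/-- Deterministic reduction of scalarized pseudo-regret to confidence bonuses:
if `φ` is monotone and `L`-Lipschitz w.r.t. ℓ∞ (the norm on `Fin d → ℝ` is the sup
norm), the optimistic vectors sandwich the means within radii `b_t`, and at every
round the committed arm maximizes the optimistic score `φ(u_t(·))`, then the total
pseudo-regret against any arm `k*` is at most `L` times the sum of the committed
arms' coordinatewise bonuses. -/
theorem pseudo_regret_reduction {d K T : ℕ} (hd : 1 ≤ d) (hK : 1 ≤ K) (hT : 1 ≤ T)
    (φ : (Fin d → ℝ) → ℝ) (L : ℝ)
    (hmono : ∀ x y : Fin d → ℝ, x ≤ y → φ x ≤ φ y)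
    (hlip : ∀ x y : Fin d → ℝ, |φ x - φ y| ≤ L * ‖x - y‖)
    (μ : Fin K → Fin d → ℝ) (u b : Fin T → Fin K → Fin d → ℝ)
    (hsand : ∀ (t : Fin T) (k : Fin K), μ k ≤ u t k ∧ u t k ≤ μ k + b t k)
    (kstar : Fin K) (kt : Fin T → Fin K)
    (hcommit : ∀ (t : Fin T) (k : Fin K), φ (u t k) ≤ φ (u t (kt t))) :
    ∑ t : Fin T, (φ (μ kstar) - φ (μ (kt t))) ≤ L * ∑ t : Fin T, ∑ j, b t (kt t) j := by
  have hL : 0 ≤ L := by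
    have j : Fin d := ⟨0, hd⟩
    have h := hlip (fun _ => (1:ℝ)) 0
    have : Nonempty (Fin d) := ⟨j⟩
    have hn : ‖(fun _ => (1:ℝ)) - (0 : Fin d → ℝ)‖ = 1 := by
      rw [sub_zero]
      simpa using pi_norm_const (1:ℝ) (ι := Fin d)
    rw [hn, mul_one] at h
    exact le_trans (abs_nonneg _) h
  rw [Finset.mul_sum]
  apply Finset.sum_le_sum
  intro t _
  have hb : ∀ j, 0 ≤ b t (kt t) j := by
    intro j
    have h1 := (hsand t (kt t)).1 j
    have h2 := (hsand t (kt t)).2 j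
    simp only [Pi.add_apply] at h2
    linarith
  have hbsum : 0 ≤ ∑ j, b t (kt t) j := Finset.sum_nonneg fun j _ => hb j
  have hnorm : ‖u t (kt t) - μ (kt t)‖ ≤ ∑ j, b t (kt t) j := by
    rw [pi_norm_le_iff_of_nonneg hbsum]
    intro j
    have h1 := (hsand t (kt t)).1 j
    have h2 := (hsand t (kt t)).2 j
    simp only [Pi.add_apply] at h2
    rw [Pi.sub_apply, Real.norm_eq_abs, abs_le]
    constructor
    · linarith
    · have : b t (kt t) j ≤ ∑ i, b t (kt t) i :=
        Finset.single_le_sum (fun i _ => hb i) (Finset.mem_univ j)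
      linarith
  have step1 : φ (μ kstar) ≤ φ (u t (kt t)) :=
    le_trans (hmono _ _ (hsand t kstar).1) (hcommit t kstar)
  have step2 : φ (u t (kt t)) - φ (μ (kt t)) ≤ L * ∑ j, b t (kt t) j := by
    calc φ (u t (kt t)) - φ (μ (kt t)) ≤ |φ (u t (kt t)) - φ (μ (kt t))| := le_abs_self _
      _ ≤ L * ‖u t (kt t) - μ (kt t)‖ := hlip _ _
      _ ≤ L * ∑ j, b t (kt t) j := by
          exact mul_le_mul_of_nonneg_left hnorm hL
  linarith
end
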